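/- arXiv:1309.6200 — 2 statements merged into one kernel-verified Lean document; each statement's English description precedes it below -/
import Mathlib

section
/- Let P, Π > 0 and set α = P/(1+P). Then for every P_S with 0 ≤ P_S ≤ Π, the quantity I(P_S) := (1/2)·log( (P+P_S+1)(P+α²P_S) / (P·P_S·(1−α)² + P + α²P_S) ) − (1/2)·log( (P+α²P_S)/P ) equals (1/2)·log(1+P), independently of P_S. -/
/-- The dirty paper coding rate `I(P_S) = I^{(P_S)}(U;Y) - I^{(P_S)}(U;S)` with
Costa's parameter `α = P/(1+P)` equals `(1/2) log (1+P)` independently of the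
state power `P_S`. -/
theorem dpc_rate_indep_of_state (P Ppi : ℝ) (hP : 0 < P) (hPpi : 0 < Ppi) :
    ∀ P_S : ℝ, 0 ≤ P_S → P_S ≤ Ppi →
      (let α := P / (1 + P);
        (1 / 2) * Real.log ((P + P_S + 1) * (P + α ^ 2 * P_S) /
            (P * P_S * (1 - α) ^ 2 + P + α ^ 2 * P_S))
          - (1 / 2) * Real.log ((P + α ^ 2 * P_S) / P))
        = (1 / 2) * Real.log (1 + P) := by
  intro P_S h0 h1
  have h1P : (0:ℝ) < 1 + P := by linarith
  set α : ℝ := P / (1 + P) with hα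
  have hαsq : α ^ 2 * P_S ≥ 0 := by positivity
  have hA : 0 < P + α ^ 2 * P_S := by linarith
  have hD : P * P_S * (1 - α) ^ 2 + P + α ^ 2 * P_S
      = P * (P + P_S + 1) / (1 + P) := by
    rw [hα]; field_simp; ring
  have hE : (P + P_S + 1) * (P + α ^ 2 * P_S) /
      (P * P_S * (1 - α) ^ 2 + P + α ^ 2 * P_S)
      = (1 + P) * ((P + α ^ 2 * P_S) / P) := by
    rw [hD]
    have hPS1 : (0:ℝ) < P + P_S + 1 := by linarith
    field_simp
  simp only [hE]
  rw [Real.log_mul (by positivity) (by positivity)]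
  ring
end

section
/- Let P > 0, Π ≥ 0, α = P/(1+P), and 0 ≤ P_S ≤ Π. Define the conditional variance V(P_S) as in the dirty paper coding analysis: V(P_S) = (P+αP_S)² · ( α²P_S(2+P_S) + P²(1+2(1−α)²P_S) + 2P(1 + αP_S + P_S(1−α)²(2+P_S)) ) / ( 2(1+P+P_S)²(P·P_S(1−α)² + P + α²P_S)² ). Then V(P_S) = P(2+P)/(2(1+P)²) for all P_S ≥ 0. -/
/-- The per-letter conditional variance of the dirty-paper information density with
`α = P/(1+P)` equals `P(2+P)/(2(1+P)²)` for every state power `P_S`. -/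
theorem dpc_variance_indep_of_state (P Ppi : ℝ) (hP : 0 < P) (hPpi : 0 ≤ Ppi) :
    ∀ P_S : ℝ, 0 ≤ P_S → P_S ≤ Ppi →
      (let α := P / (1 + P);
        (P + α * P_S) ^ 2 *
            (α ^ 2 * P_S * (2 + P_S) + P ^ 2 * (1 + 2 * (1 - α) ^ 2 * P_S)
              + 2 * P * (1 + α * P_S + P_S * (1 - α) ^ 2 * (2 + P_S))) /
          (2 * (1 + P + P_S) ^ 2 * (P * P_S * (1 - α) ^ 2 + P + α ^ 2 * P_S) ^ 2))
        = P * (2 + P) / (2 * (1 + P) ^ 2) := by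
  intro P_S hS _
  have h1P : (0:ℝ) < 1 + P := by linarith
  have h1P' : (1 + P : ℝ) ≠ 0 := ne_of_gt h1P
  have hSP : (1 + P + P_S : ℝ) ≠ 0 := by positivity
  have hden : P * P_S * (1 - P / (1 + P)) ^ 2 + P + (P / (1 + P)) ^ 2 * P_S ≠ 0 := by
    positivity
  simp only []
  field_simp
  ring
end
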